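/- arXiv:1807.07457 — 2 statements merged into one kernel-verified Lean document; each statement's English description precedes it below -/
import Mathlib

section
/- Let λ be a partition of n written as (λ_1^{m_1}, …, λ_l^{m_l}) in exponential notation (distinct column lengths λ_1 > … > λ_l with multiplicities m_i), and let t be the standard skew tableau obtained from τ_λ by deleting the box containing 1 and subtracting 1 from every remaining entry. Then the box vacated by the jeu de taquin slide of t into the cell (1,1) is the box (λ_1, m_1). -/
/-- Partial sum `λ₁ + ⋯ + λ_k` of a 1-indexed sequence of parts. -/
def psum (lam : ℕ → ℕ) (k : ℕ) : ℕ := ∑ i ∈ Finset.Icc 1 k, lam i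

/-- `lam` is a composition of `n` (1-indexed parts, extended by zeros). -/
def IsComp (n : ℕ) (lam : ℕ → ℕ) : Prop :=
  lam 0 = 0 ∧ ∃ N, (∀ i, N < i → lam i = 0) ∧ psum lam N = n

/-- `lam` is a partition of `n` (weakly decreasing parts). -/
def IsPartition (n : ℕ) (lam : ℕ → ℕ) : Prop :=
  IsComp n lam ∧ ∀ i j, 1 ≤ i → i ≤ j → lam j ≤ lam i

/-- Dominance order in the paper's (column) convention: `lam` dominates `mu`
(written `mu ≤ lam`) iff every partial sum of `lam` is at most the
corresponding partial sum of `mu`. -/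
def Dominates (lam mu : ℕ → ℕ) : Prop := ∀ k, psum lam k ≤ psum mu k

/-- Row index of the box containing the entry `k`. -/
def rowT (p : ℕ → ℕ × ℕ) (k : ℕ) : ℕ := (p k).1
/-- Column index of the box containing the entry `k`. -/
def colT (p : ℕ → ℕ × ℕ) (k : ℕ) : ℕ := (p k).2

/-- `p` is the position function of a bijective filling of the skew diagram
`[lam] ∖ [mu]` (1-indexed rows and columns, `lam j` boxes in column `j`)
by the entries `a+1, …, a+n`. -/
def IsSkewTab (lam mu : ℕ → ℕ) (a n : ℕ) (p : ℕ → ℕ × ℕ) : Prop :=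
  (∀ k ∈ Finset.Icc (a+1) (a+n),
      1 ≤ (p k).2 ∧ mu (p k).2 < (p k).1 ∧ (p k).1 ≤ lam (p k).2) ∧
  (∀ k ∈ Finset.Icc (a+1) (a+n), ∀ l ∈ Finset.Icc (a+1) (a+n), p k = p l → k = l) ∧
  (∀ c : ℕ × ℕ, 1 ≤ c.2 → mu c.2 < c.1 → c.1 ≤ lam c.2 →
      ∃ k ∈ Finset.Icc (a+1) (a+n), p k = c)

/-- A straight-shape `lam`-tableau with entries `1, …, n`. -/
def IsTab (lam : ℕ → ℕ) (n : ℕ) (p : ℕ → ℕ × ℕ) : Prop :=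
  IsSkewTab lam (fun _ => 0) 0 n p

/-- Entries increase down each column. -/
def ColStd (a n : ℕ) (p : ℕ → ℕ × ℕ) : Prop :=
  ∀ k ∈ Finset.Icc (a+1) (a+n), ∀ l ∈ Finset.Icc (a+1) (a+n),
    colT p k = colT p l → rowT p k < rowT p l → k < l

/-- Entries increase along each row. -/
def RowStd (a n : ℕ) (p : ℕ → ℕ × ℕ) : Prop :=
  ∀ k ∈ Finset.Icc (a+1) (a+n), ∀ l ∈ Finset.Icc (a+1) (a+n),
    rowT p k = rowT p l → colT p k < colT p l → k < l

/-- Standard skew tableau of shape `lam/mu` with entries `a+1, …, a+n`. -/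
def IsStdSkew (lam mu : ℕ → ℕ) (a n : ℕ) (p : ℕ → ℕ × ℕ) : Prop :=
  IsSkewTab lam mu a n p ∧ ColStd a n p ∧ RowStd a n p

/-- Standard `lam`-tableau with entries `1, …, n`. -/
def IsStd (lam : ℕ → ℕ) (n : ℕ) (p : ℕ → ℕ × ℕ) : Prop :=
  IsStdSkew lam (fun _ => 0) 0 n p

/-- Column standard straight-shape `lam`-tableau. -/
def IsColStdTab (lam : ℕ → ℕ) (n : ℕ) (p : ℕ → ℕ × ℕ) : Prop :=
  IsTab lam n p ∧ ColStd 0 n p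

/-- `i ∈ D(p)`: a descent, `col(i) ≥ col(i+1)`. -/
def inD (a n : ℕ) (p : ℕ → ℕ × ℕ) (i : ℕ) : Prop :=
  a + 1 ≤ i ∧ i + 1 ≤ a + n ∧ colT p (i+1) ≤ colT p i
/-- `i ∈ SD(p)`: a strong descent, `col(i) > col(i+1)`. -/
def inSD (a n : ℕ) (p : ℕ → ℕ × ℕ) (i : ℕ) : Prop :=
  a + 1 ≤ i ∧ i + 1 ≤ a + n ∧ colT p (i+1) < colT p i
/-- `i ∈ WD(p)`: a weak descent, `col(i) = col(i+1)`. -/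
def inWD (a n : ℕ) (p : ℕ → ℕ × ℕ) (i : ℕ) : Prop :=
  a + 1 ≤ i ∧ i + 1 ≤ a + n ∧ colT p (i+1) = colT p i
/-- `i ∈ A(p)`: an ascent, `col(i) < col(i+1)`. -/
def inA (a n : ℕ) (p : ℕ → ℕ × ℕ) (i : ℕ) : Prop :=
  a + 1 ≤ i ∧ i + 1 ≤ a + n ∧ colT p i < colT p (i+1)
/-- `i ∈ SA(p)`: a strong ascent, `row(i) > row(i+1)`. -/
def inSA (a n : ℕ) (p : ℕ → ℕ × ℕ) (i : ℕ) : Prop :=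
  a + 1 ≤ i ∧ i + 1 ≤ a + n ∧ rowT p (i+1) < rowT p i

/-- Descent set of a tableau with entries `1, …, n`. -/
def Dset (n : ℕ) (p : ℕ → ℕ × ℕ) : Set ℕ := {i | inD 0 n p i}

/-- Shape of the restriction of `p` to entries `≤ m`: the number of boxes
of column `j` occupied by entries `≤ m`. -/
def resShape (p : ℕ → ℕ × ℕ) (m j : ℕ) : ℕ :=
  ((Finset.Icc 1 m).filter (fun k => colT p k = j)).card

/-- Extended dominance order on standard tableaux with `n` boxes: `u ≤ t`. -/
def ExtDomLe (n : ℕ) (pu pt : ℕ → ℕ × ℕ) : Prop :=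
  ∀ m ∈ Finset.Icc 1 n, Dominates (fun j => resShape pt m j) (fun j => resShape pu m j)

/-- `i` is the restriction number of `(u,t)`: the restrictions to entries `≤ i`
agree, and `i` is maximal with this property. -/
def RestNum (n : ℕ) (pu pt : ℕ → ℕ × ℕ) (i : ℕ) : Prop :=
  i ≤ n ∧ (∀ k, 1 ≤ k → k ≤ i → pu k = pt k) ∧ (i = n ∨ pu (i+1) ≠ pt (i+1))

/-- `(u,t)` is favourable with restriction number `i`:
`i` lies in the symmetric difference `D(u) ⊕ D(t)`. -/
def Favourable (n : ℕ) (pu pt : ℕ → ℕ × ℕ) (i : ℕ) : Prop :=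
  RestNum n pu pt i ∧
    ((inD 0 n pu i ∧ ¬ inD 0 n pt i) ∨ (inD 0 n pt i ∧ ¬ inD 0 n pu i))

/-- Dual Knuth move of the first kind of index `k` from `u` to `t`,
on standard tableaux of shape `lam`:  `t = s_k u` with
`D(u) ∩ {k-1,k} = {k-1}` and `D(t) ∩ {k-1,k} = {k}`. -/
def DK1 (lam : ℕ → ℕ) (n : ℕ) (pu pt : ℕ → ℕ × ℕ) (k : ℕ) : Prop :=
  IsStd lam n pu ∧ IsStd lam n pt ∧ 2 ≤ k ∧
  (∀ m, pt m = pu (Equiv.swap k (k+1) m)) ∧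
  inD 0 n pu (k-1) ∧ ¬ inD 0 n pu k ∧ inD 0 n pt k ∧ ¬ inD 0 n pt (k-1)

/-- Dual Knuth move of the second kind of index `k` from `u` to `t`:
`t = s_k u` with `D(u) ∩ {k,k+1} = {k+1}` and `D(t) ∩ {k,k+1} = {k}`. -/
def DK2 (lam : ℕ → ℕ) (n : ℕ) (pu pt : ℕ → ℕ × ℕ) (k : ℕ) : Prop :=
  IsStd lam n pu ∧ IsStd lam n pt ∧ k + 2 ≤ n ∧
  (∀ m, pt m = pu (Equiv.swap k (k+1) m)) ∧
  inD 0 n pu (k+1) ∧ ¬ inD 0 n pu k ∧ inD 0 n pt k ∧ ¬ inD 0 n pt (k+1)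

/-- A dual Knuth move (of either kind) of index `k` from `u` to `t`. -/
def DKMove (lam : ℕ → ℕ) (n : ℕ) (pu pt : ℕ → ℕ × ℕ) (k : ℕ) : Prop :=
  DK1 lam n pu pt k ∨ DK2 lam n pu pt k

/-- A paired dual Knuth move: a dual Knuth move of the same kind and the same
index applied simultaneously to both components of a pair. -/
def PairedDKMove (mu lam : ℕ → ℕ) (n : ℕ)
    (a b : (ℕ → ℕ × ℕ) × (ℕ → ℕ × ℕ)) : Prop :=
  ∃ k, (DK1 mu n a.1 b.1 k ∧ DK1 lam n a.2 b.2 k) ∨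
       (DK2 mu n a.1 b.1 k ∧ DK2 lam n a.2 b.2 k)

/-- Paired dual Knuth equivalence: the equivalence relation generated by
paired dual Knuth moves. -/
def PairedDKEquiv (mu lam : ℕ → ℕ) (n : ℕ)
    (a b : (ℕ → ℕ × ℕ) × (ℕ → ℕ × ℕ)) : Prop :=
  Relation.ReflTransGen
    (fun x y => PairedDKMove mu lam n x y ∨ PairedDKMove mu lam n y x) a b

/-- Lexicographic order on same-shape column standard tableaux: `u <_lex t`. -/
def LexLT (n : ℕ) (pu pt : ℕ → ℕ × ℕ) : Prop :=
  ∃ l, 1 ≤ l ∧ l ≤ n ∧ colT pt l < colT pu l ∧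
    ∀ m, l < m → m ≤ n → colT pt m = colT pu m

/-- `w` is a permutation of `[1,n]`, fixing all other natural numbers. -/
def IsPermOf (n : ℕ) (w : ℕ → ℕ) : Prop :=
  (∀ k ∈ Finset.Icc 1 n, w k ∈ Finset.Icc 1 n) ∧
  (∀ k ∈ Finset.Icc 1 n, ∀ l ∈ Finset.Icc 1 n, w k = w l → k = l) ∧
  (∀ k, k ∉ Finset.Icc 1 n → w k = k)

/-- The Coxeter length of `w ∈ S_n`: the number of inversions. -/
def lenInv (n : ℕ) (w : ℕ → ℕ) : ℕ :=
  ((Finset.Icc 1 n ×ˢ Finset.Icc 1 n).filter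
    (fun q => q.1 < q.2 ∧ w q.2 < w q.1)).card

/-- One step of the Bruhat order on `S_n`: `y = (i j) ∘ x` (so `y x⁻¹` is a
reflection) with `l(x) < l(y)`. -/
def BruhatStep (n : ℕ) (x y : ℕ → ℕ) : Prop :=
  lenInv n x < lenInv n y ∧
  ∃ i j, 1 ≤ i ∧ i < j ∧ j ≤ n ∧ ∀ k, y k = Equiv.swap i j (x k)

/-- The Bruhat order on `S_n`. -/
def BruhatLe (n : ℕ) (x y : ℕ → ℕ) : Prop :=
  Relation.ReflTransGen (BruhatStep n) x y

/-- One step of the left weak order on `S_n`: `y = s_i ∘ x` with `l(x) < l(y)`. -/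
def WeakStep (n : ℕ) (x y : ℕ → ℕ) : Prop :=
  lenInv n x < lenInv n y ∧
  ∃ i, 1 ≤ i ∧ i + 1 ≤ n ∧ ∀ k, y k = Equiv.swap i (i+1) (x k)

/-- The left weak order on `S_n`. -/
def WeakLe (n : ℕ) (x y : ℕ → ℕ) : Prop :=
  Relation.ReflTransGen (WeakStep n) x y

/-- `ptau` is (the position function of) the column superstandard tableau
`τ_lam`: column standard, with the columns filled in order from left to right. -/
def IsSuperstandard (lam : ℕ → ℕ) (n : ℕ) (ptau : ℕ → ℕ × ℕ) : Prop :=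
  IsTab lam n ptau ∧ ColStd 0 n ptau ∧
  ∀ k, 1 ≤ k → k + 1 ≤ n → colT ptau k ≤ colT ptau (k+1)

/-- `w = perm(t)`, i.e. `w · τ_lam = t`: for each `k`, the box of `τ_lam`
containing `k` contains `w k` in `t`. -/
def IsPermTab (n : ℕ) (ptau pt : ℕ → ℕ × ℕ) (w : ℕ → ℕ) : Prop :=
  IsPermOf n w ∧ ∀ k ∈ Finset.Icc 1 n, pt (w k) = ptau k

/-- `p` (a standard skew tableau of shape `lam/mu` with entries `a+1, …, a+n`)
is the `(a+1)`-critical tableau: writing `m = a+1`, the entry `m` lies in the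
first nonempty column `i` of the skew diagram, `m+1` lies in column `i+1`,
and the restriction to entries `> m+1` is minimal (no strong descents). -/
def IsCritical (lam mu : ℕ → ℕ) (a n : ℕ) (p : ℕ → ℕ × ℕ) : Prop :=
  IsStdSkew lam mu a n p ∧
  (∀ j, 1 ≤ j → j < colT p (a+1) → lam j ≤ mu j) ∧
  mu (colT p (a+1)) < lam (colT p (a+1)) ∧
  colT p (a+2) = colT p (a+1) + 1 ∧
  ∀ i, a + 3 ≤ i → i + 1 ≤ a + n → colT p i ≤ colT p (i+1)

/-- The box `c` is removable from the diagram of `lam`. -/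
def Removable (lam : ℕ → ℕ) (c : ℕ × ℕ) : Prop :=
  1 ≤ c.2 ∧ c.1 = lam c.2 ∧ lam (c.2 + 1) < c.1

/-- One step of a jeu de taquin slide on a filling `p` with entries `1, …, n`:
the hole moves from `b` to `b'`, where `b'` is the box (below or to the right
of `b`) containing the smaller entry `x` among the occupied candidates, and the
filling is updated by moving `x` into `b`. -/
def SlideStep (n : ℕ) (p : ℕ → ℕ × ℕ) (b : ℕ × ℕ)
    (p' : ℕ → ℕ × ℕ) (b' : ℕ × ℕ) : Prop :=
  ∃ x, 1 ≤ x ∧ x ≤ n ∧ p x = b' ∧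
    (b' = (b.1 + 1, b.2) ∨ b' = (b.1, b.2 + 1)) ∧
    (∀ y, 1 ≤ y → y ≤ n → (p y = (b.1 + 1, b.2) ∨ p y = (b.1, b.2 + 1)) → x ≤ y) ∧
    (∀ y, p' y = if y = x then b else p y)

/-- `lam/mu` is a skew partition of `n`. -/
def IsSkewShape (n : ℕ) (lam mu : ℕ → ℕ) : Prop :=
  (∃ m, IsPartition (m + n) lam ∧ IsPartition m mu) ∧ ∀ j, mu j ≤ lam j

/-!
In `τ_λ` every entry of column `c` is smaller than every entry of column `c + 1`, so the
hole of the slide moves down whenever the box below it lies in the diagram and to the right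
otherwise. Starting from `(1,1)` it therefore runs down the first column to `(λ₁, 1)` and
then along row `λ₁` through the `m₁` columns of length `λ₁`; the first removable box on
this path is `(λ₁, m₁)`. The only thing to check about the slide itself is that the entries
next to the hole are still those of `t`: the hole never revisits a box, since every move
raises the sum of its coordinates by one.
-/

open Finset

namespace IsPartition

variable {n : ℕ} {lam : ℕ → ℕ}

theorem psum_le (hlam : IsPartition n lam) (j : ℕ) : psum lam j ≤ n := by
  obtain ⟨⟨-, N, hNz, hNs⟩, -⟩ := hlam
  calc psum lam j ≤ psum lam (j ⊔ N) :=
        sum_le_sum_of_subset (Icc_subset_Icc_right le_sup_left)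
    _ = psum lam N := by
        refine (sum_subset (Icc_subset_Icc_right le_sup_right) fun i hi hiN => hNz i ?_).symm
        simp only [mem_Icc] at hi hiN
        omega
    _ = n := hNs

theorem eq_zero_of_lt (hlam : IsPartition n lam) {j : ℕ} (hj : n < j) : lam j = 0 := by
  by_contra hne
  have hpos : ∀ i ∈ Icc 1 j, 1 ≤ lam i := fun i hi =>
    (Nat.one_le_iff_ne_zero.2 hne).trans (hlam.2 i j (mem_Icc.1 hi).1 (mem_Icc.1 hi).2)
  have hjle : j ≤ psum lam j := by
    simpa [psum] using card_nsmul_le_sum (Icc 1 j) lam 1 hpos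
  have := hlam.psum_le j
  omega

theorem one_le_head (hlam : IsPartition n lam) (hn : 1 ≤ n) : 1 ≤ lam 1 := by
  obtain ⟨⟨-, N, -, hNs⟩, hdec⟩ := hlam
  by_contra h0
  have : psum lam N = 0 :=
    sum_eq_zero fun i hi => by have := hdec 1 i le_rfl (mem_Icc.1 hi).1; omega
  omega

theorem eq_head_iff_le_card (hlam : IsPartition n lam) (hn : 1 ≤ n) {j : ℕ} (hj : 1 ≤ j) :
    lam j = lam 1 ↔ j ≤ ((Icc 1 n).filter (fun i => lam i = lam 1)).card := by
  set G := Nat.findGreatest (fun i => lam i = lam 1) n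
  have hG : G ≤ n := Nat.findGreatest_le n
  have hlamG : lam G = lam 1 := Nat.findGreatest_spec (P := fun i => lam i = lam 1) hn rfl
  have hiff : ∀ i, 1 ≤ i → (lam i = lam 1 ↔ i ≤ G) := by
    intro i hi
    constructor
    · intro hi1
      have hin : i ≤ n := by
        by_contra hin
        have := hlam.eq_zero_of_lt (not_le.1 hin)
        have := hlam.one_le_head hn
        omega
      exact Nat.le_findGreatest hin hi1
    · intro hiG
      have h1 := hlam.2 1 i le_rfl hi
      have h2 := hlam.2 i G hi hiG
      omega
  have hfilter : (Icc 1 n).filter (fun i => lam i = lam 1) = Icc 1 G := by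
    ext i
    simp only [mem_filter, mem_Icc]
    constructor
    · rintro ⟨⟨hi1, -⟩, hi⟩
      exact ⟨hi1, (hiff i hi1).1 hi⟩
    · rintro ⟨hi1, hiG⟩
      exact ⟨⟨hi1, hiG.trans hG⟩, (hiff i hi1).2 hiG⟩
  rw [hfilter, Nat.card_Icc, Nat.add_sub_cancel]
  exact hiff j hj

end IsPartition

theorem IsSuperstandard.colT_mono {lam : ℕ → ℕ} {n : ℕ} {ptau : ℕ → ℕ × ℕ}
    (htau : IsSuperstandard lam n ptau) {k l : ℕ} (hk : 1 ≤ k) (hkl : k ≤ l) (hl : l ≤ n) :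
    colT ptau k ≤ colT ptau l := by
  induction l, hkl using Nat.le_induction with
  | base => exact le_rfl
  | succ l hkl ih => exact (ih (by omega)).trans (htau.2.2 l (hk.trans hkl) hl)

theorem IsTab.rowT_one {lam : ℕ → ℕ} {n : ℕ} {p : ℕ → ℕ × ℕ}
    (htab : IsTab lam n p) (hcol : ColStd 0 n p) (hn : 1 ≤ n) : rowT p 1 = 1 := by
  obtain ⟨hbox, -, hsurj⟩ := htab
  dsimp only at hbox hsurj
  have h1 : (1 : ℕ) ∈ Icc (0 + 1) (0 + n) := by simp [hn]
  obtain ⟨hc, hr, hle⟩ := hbox 1 h1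
  by_contra hne
  obtain ⟨w, hw, hpw⟩ := hsurj (1, (p 1).2) hc Nat.one_pos (by show 1 ≤ lam (p 1).2; omega)
  have hw1 := (mem_Icc.1 hw).1
  have hlt : w < 1 :=
    hcol w hw 1 h1 (by simp [colT, hpw]) (by simp only [rowT, hpw] at hne ⊢; omega)
  omega

def HoleMove (n : ℕ) (p : ℕ → ℕ × ℕ) (h h' : ℕ × ℕ) : Prop :=
  ∃ x, 1 ≤ x ∧ x ≤ n ∧ p x = h' ∧
    (h' = (h.1 + 1, h.2) ∨ h' = (h.1, h.2 + 1)) ∧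
    ∀ y, 1 ≤ y → y ≤ n → (p y = (h.1 + 1, h.2) ∨ p y = (h.1, h.2 + 1)) → x ≤ y

theorem HoleMove.congr {n : ℕ} {p q : ℕ → ℕ × ℕ} {h h' : ℕ × ℕ}
    (hpq : ∀ c, (c = (h.1 + 1, h.2) ∨ c = (h.1, h.2 + 1)) → ∀ y, (p y = c ↔ q y = c))
    (hmove : HoleMove n p h h') : HoleMove n q h h' := by
  obtain ⟨x, hx1, hxn, hpx, hnbr, hmin⟩ := hmove
  refine ⟨x, hx1, hxn, (hpq _ hnbr x).1 hpx, hnbr, fun y hy1 hyn hy => hmin y hy1 hyn ?_⟩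
  rcases hy with hy | hy
  · exact Or.inl ((hpq _ (Or.inl rfl) y).2 hy)
  · exact Or.inr ((hpq _ (Or.inr rfl) y).2 hy)

def downOrRight (lam : ℕ → ℕ) (h : ℕ × ℕ) : ℕ × ℕ :=
  if h.1 + 1 ≤ lam h.2 then (h.1 + 1, h.2) else (h.1, h.2 + 1)

theorem IsSuperstandard.holeMove_eq_downOrRight
    {lam : ℕ → ℕ} {n : ℕ} {ptau : ℕ → ℕ × ℕ}
    (htau : IsSuperstandard lam n ptau) {h h' : ℕ × ℕ} (hh1 : 1 ≤ h.1) (hh2 : 1 ≤ h.2)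
    (hmove : HoleMove (n - 1) (fun k => ptau (k + 1)) h h') : h' = downOrRight lam h := by
  obtain ⟨x, hx1, hxn, hpx, hnbr, hmin⟩ := hmove
  have ⟨⟨hbox, _, hsurj⟩, hcol, _⟩ := htau
  dsimp only at hbox hsurj
  unfold downOrRight
  split_ifs with hdown
  · obtain ⟨z, hz, hpz⟩ := hsurj (h.1 + 1, h.2) hh2 (by simp) hdown
    obtain ⟨hz1, hzn⟩ := mem_Icc.1 hz
    -- `1` sits in row `1` of `τ_λ`, so the box below the hole holds an entry of `t`
    have hz2 : z ≠ 1 := by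
      rintro rfl
      have := htau.1.rowT_one hcol (by omega)
      simp only [rowT, hpz] at this
      omega
    have hxz : x + 1 ≤ z := by
      have hpz' : ptau (z - 1 + 1) = (h.1 + 1, h.2) := by rwa [Nat.sub_add_cancel hz1]
      have := hmin (z - 1) (by omega) (by omega) (Or.inl hpz')
      omega
    rcases hnbr with hd | hr
    · exact hd
    · have := htau.colT_mono (by omega) hxz (by omega)
      simp only [colT, hpx, hr, hpz] at this
      omega
  · rcases hnbr with hd | hr
    · have := (hbox (x + 1) (by simp only [mem_Icc]; omega)).2.2
      simp only [hpx, hd] at this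
      exact absurd this hdown
    · exact hr

section Slide

variable {n M : ℕ} {P : ℕ → ℕ → ℕ × ℕ} {b : ℕ → ℕ × ℕ}

theorem SlideStep.holeMove {p p' : ℕ → ℕ × ℕ} {h h' : ℕ × ℕ}
    (hs : SlideStep n p h p' h') : HoleMove n p h h' :=
  let ⟨x, hx1, hxn, hpx, hnbr, hmin, _⟩ := hs
  ⟨x, hx1, hxn, hpx, hnbr, hmin⟩

theorem SlideStep.apply_eq_iff {p p' : ℕ → ℕ × ℕ} {h h' c : ℕ × ℕ}
    (hs : SlideStep n p h p' h') (hch : c ≠ h) (hch' : c ≠ h') (y : ℕ) :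
    p' y = c ↔ p y = c := by
  obtain ⟨x, -, -, hpx, -, -, hupd⟩ := hs
  rw [hupd]
  split_ifs with hyx
  · subst hyx
    rw [hpx]
    exact ⟨fun h => absurd h.symm hch, fun h => absurd h.symm hch'⟩
  · rfl

theorem slide_hole_ge
    (hstep : ∀ k < M, SlideStep n (P k) (b k) (P (k + 1)) (b (k + 1))) :
    ∀ k ≤ M, (b 0).1 ≤ (b k).1 ∧ (b 0).2 ≤ (b k).2 := by
  intro k
  induction k with
  | zero => intro _; exact ⟨le_rfl, le_rfl⟩
  | succ k ih =>
    intro hk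
    obtain ⟨x, -, -, -, hnbr, -⟩ := hstep k hk
    obtain ⟨ih1, ih2⟩ := ih (by omega)
    rcases hnbr with hb | hb <;> rw [hb] <;> constructor <;> simp only <;> omega

theorem slide_hole_sum
    (hstep : ∀ k < M, SlideStep n (P k) (b k) (P (k + 1)) (b (k + 1))) :
    ∀ k ≤ M, (b k).1 + (b k).2 = (b 0).1 + (b 0).2 + k := by
  intro k
  induction k with
  | zero => intro _; rfl
  | succ k ih =>
    intro hk
    obtain ⟨x, -, -, -, hnbr, -⟩ := hstep k hk
    have := ih (by omega)
    rcases hnbr with hb | hb <;> rw [hb] <;> simp only <;> omega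

theorem slide_apply_eq_iff_of_unvisited
    (hstep : ∀ k < M, SlideStep n (P k) (b k) (P (k + 1)) (b (k + 1))) {c : ℕ × ℕ} :
    ∀ k ≤ M, (∀ i ≤ k, c ≠ b i) → ∀ y, (P k y = c ↔ P 0 y = c) := by
  intro k
  induction k with
  | zero => intro _ _ _; rfl
  | succ k ih =>
    intro hk hc y
    rw [(hstep k hk).apply_eq_iff (hc k (by omega)) (hc (k + 1) le_rfl) y]
    exact ih (by omega) (fun i hi => hc i (by omega)) y

theorem slide_holeMove_initial
    (hstep : ∀ k < M, SlideStep n (P k) (b k) (P (k + 1)) (b (k + 1))) {k : ℕ} (hk : k < M) :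
    HoleMove n (P 0) (b k) (b (k + 1)) := by
  refine HoleMove.congr (fun c hc => ?_) (hstep k hk).holeMove
  apply slide_apply_eq_iff_of_unvisited hstep k hk.le
  intro i hi hci
  have hsum_i := slide_hole_sum hstep i (by omega)
  have hsum_k := slide_hole_sum hstep k hk.le
  rcases hc with rfl | rfl <;> rw [← hci] at hsum_i <;> simp only at hsum_i <;> omega

end Slide

def cornerPath (L k : ℕ) : ℕ × ℕ :=
  if k < L then (k + 1, 1) else (L, k + 2 - L)

section CornerPath

variable {lam : ℕ → ℕ} {m : ℕ}

theorem cornerPath_of_add_two_eq {L k : ℕ} (hk : k + 2 = L + m) (hm : 1 ≤ m) :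
    cornerPath L k = (L, m) := by
  unfold cornerPath
  split_ifs <;> ext <;> simp only <;> omega

theorem downOrRight_cornerPath (hmult : ∀ j, 1 ≤ j → (lam j = lam 1 ↔ j ≤ m)) {k : ℕ}
    (hk : k + 2 < lam 1 + m) :
    downOrRight lam (cornerPath (lam 1) k) = cornerPath (lam 1) (k + 1) := by
  unfold cornerPath downOrRight
  by_cases hkL : k < lam 1
  · simp only [if_pos hkL]
    split_ifs <;> ext <;> simp only <;> omega
  · have hc := (hmult (k + 2 - lam 1) (by omega)).2 (by omega)
    simp only [if_neg hkL, if_neg (show ¬ k + 1 < lam 1 by omega)]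
    rw [if_neg (by omega)]
    ext
    · rfl
    · simp only
      omega

theorem removable_cornerPath_iff (hmult : ∀ j, 1 ≤ j → (lam j = lam 1 ↔ j ≤ m))
    (hanti : ∀ j, 1 ≤ j → lam j ≤ lam 1) {k : ℕ} (hk : k + 2 ≤ lam 1 + m) :
    Removable lam (cornerPath (lam 1) k) ↔ k + 2 = lam 1 + m := by
  have hm : 1 ≤ m := (hmult 1 le_rfl).1 rfl
  constructor
  · unfold cornerPath Removable
    split_ifs with hkL
    · rintro ⟨-, h1, h2⟩
      simp only [Nat.reduceAdd] at h1 h2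
      have := mt (hmult 2 (by omega)).2
      omega
    · rintro ⟨-, -, h2⟩
      have := mt (hmult (k + 2 - lam 1 + 1) (by omega)).2
      simp only at h2
      omega
  · intro hkm
    rw [cornerPath_of_add_two_eq hkm hm]
    have := hanti (m + 1) (by omega)
    have := mt (hmult (m + 1) (by omega)).1
    exact ⟨hm, ((hmult m hm).2 le_rfl).symm, by simp only; omega⟩

theorem hole_eq_of_downOrRight (hmult : ∀ j, 1 ≤ j → (lam j = lam 1 ↔ j ≤ m))
    (hanti : ∀ j, 1 ≤ j → lam j ≤ lam 1) (hL : 1 ≤ lam 1)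
    {M : ℕ} {b : ℕ → ℕ × ℕ}
    (hb0 : b 0 = (1, 1)) (hnext : ∀ k < M, b (k + 1) = downOrRight lam (b k))
    (hnotrem : ∀ k < M, ¬ Removable lam (b k)) (hrem : Removable lam (b M)) :
    b M = (lam 1, m) := by
  have hm : 1 ≤ m := (hmult 1 le_rfl).1 rfl
  have hpath : ∀ k ≤ M, b k = cornerPath (lam 1) k ∧ k + 2 ≤ lam 1 + m := by
    intro k
    induction k with
    | zero => intro _; exact ⟨by rw [hb0, cornerPath, if_pos (by omega)], by omega⟩
    | succ k ih =>
      intro hk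
      obtain ⟨hbk, hkm⟩ := ih (by omega)
      have hlt : k + 2 < lam 1 + m := lt_of_le_of_ne hkm fun he =>
        hnotrem k (by omega) (hbk ▸ (removable_cornerPath_iff hmult hanti hkm).2 he)
      exact ⟨by rw [hnext k (by omega), hbk, downOrRight_cornerPath hmult hlt], hlt⟩
  obtain ⟨hbM, hMm⟩ := hpath M le_rfl
  rw [hbM] at hrem ⊢
  exact cornerPath_of_add_two_eq ((removable_cornerPath_iff hmult hanti hMm).1 hrem) hm

end CornerPath

/-- for `t = (τ_lam minus its box containing 1) - 1`, the jeu de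
taquin slide into `(1,1)` vacates the box `(lam 1, m₁)`, where `m₁` is the
multiplicity of the longest column length `lam 1`. -/
theorem jdt_vacated_box (n : ℕ) (hn : 1 ≤ n) (lam : ℕ → ℕ)
    (hlam : IsPartition n lam)
    (ptau : ℕ → ℕ × ℕ) (htau : IsSuperstandard lam n ptau)
    (p0 : ℕ → ℕ × ℕ) (hp0 : ∀ k, p0 k = ptau (k+1))
    (M : ℕ) (b : ℕ → ℕ × ℕ) (P : ℕ → ℕ → ℕ × ℕ)
    (hb0 : b 0 = (1, 1)) (hP0 : P 0 = p0)
    (hstep : ∀ k < M, SlideStep (n-1) (P k) (b k) (P (k+1)) (b (k+1)))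
    (hnotrem : ∀ k < M, ¬ Removable lam (b k))
    (hrem : Removable lam (b M)) :
    b M = (lam 1, ((Finset.Icc 1 n).filter (fun j => lam j = lam 1)).card) := by
  have hP0tau : P 0 = fun k => ptau (k + 1) := hP0.trans (funext hp0)
  have hnext : ∀ k < M, b (k + 1) = downOrRight lam (b k) := by
    intro k hk
    obtain ⟨h1, h2⟩ := slide_hole_ge hstep k hk.le
    rw [hb0] at h1 h2
    exact htau.holeMove_eq_downOrRight h1 h2 (hP0tau ▸ slide_holeMove_initial hstep hk)
  exact hole_eq_of_downOrRight (fun j hj => hlam.eq_head_iff_le_card hn hj)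
    (fun j hj => hlam.2 1 j le_rfl hj) (hlam.one_le_head hn) hb0 hnext hnotrem hrem
end

section
/- Let u, t be standard tableaux with n boxes (of possibly different shapes) such that the restriction number of (u,t) is n−1 and D(u) = D(t) ∪ {n−1} with n−1 ∉ D(t). Then col_u(n) < col_t(n), shape(u) < shape(t) in dominance order, and u < t in the extended dominance order. -/
/-!
The restrictions of `u` and `t` to the entries `≤ n - 1` coincide, so the two tableaux differ
only in the box of `n`. As `n - 1` is a descent of `u` but not of `t`,
`col_u(n) ≤ col_u(n - 1) = col_t(n - 1) < col_t(n)`. Adding one box to a common shape in an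
earlier column produces a shape that is smaller in the column dominance order, and strictly so,
since the two shapes differ in the column of `n` in `u`.
-/

lemma resShape_congr {p q : ℕ → ℕ × ℕ} {m : ℕ}
    (h : ∀ k ∈ Finset.Icc 1 m, colT p k = colT q k) (j : ℕ) :
    resShape p m j = resShape q m j := by
  unfold resShape
  rw [Finset.filter_congr fun k hk => by rw [h k hk]]

lemma resShape_succ (p : ℕ → ℕ × ℕ) (m j : ℕ) :
    resShape p (m + 1) j = resShape p m j + if colT p (m + 1) = j then 1 else 0 := by
  unfold resShape
  rw [← Finset.insert_Icc_right_eq_Icc_add_one (by omega), Finset.filter_insert]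
  split_ifs
  · rw [Finset.card_insert_of_notMem (by simp)]
  · rfl

lemma psum_add_indicator (g : ℕ → ℕ) (c k : ℕ) :
    psum (fun j => g j + if c = j then 1 else 0) k
      = psum g k + if c ∈ Finset.Icc 1 k then 1 else 0 := by
  rw [psum, Finset.sum_add_distrib, Finset.sum_ite_eq]
  rfl

lemma dominates_resShape_succ {p q : ℕ → ℕ × ℕ} {m : ℕ}
    (hpq : ∀ j, resShape p m j = resShape q m j) (hpos : 1 ≤ colT p (m + 1))
    (hcol : colT p (m + 1) ≤ colT q (m + 1)) :
    Dominates (resShape q (m + 1)) (resShape p (m + 1)) := by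
  intro k
  have hp : resShape p (m + 1) = fun j => resShape p m j + if colT p (m + 1) = j then 1 else 0 :=
    funext (resShape_succ p m)
  have hq : resShape q (m + 1) = fun j => resShape p m j + if colT q (m + 1) = j then 1 else 0 :=
    funext fun j => by rw [resShape_succ, hpq]
  rw [hp, hq, psum_add_indicator, psum_add_indicator]
  simp only [Finset.mem_Icc]
  split_ifs <;> omega

lemma resShape_succ_ne {p q : ℕ → ℕ × ℕ} {m : ℕ}
    (hpq : ∀ j, resShape p m j = resShape q m j) (hcol : colT p (m + 1) ≠ colT q (m + 1)) :
    resShape p (m + 1) (colT p (m + 1)) ≠ resShape q (m + 1) (colT p (m + 1)) := by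
  rw [resShape_succ, resShape_succ, hpq, if_pos rfl, if_neg (Ne.symm hcol)]
  omega

lemma IsTab.resShape_eq {lam : ℕ → ℕ} {n : ℕ} {p : ℕ → ℕ × ℕ} (h : IsTab lam n p)
    {j : ℕ} (hj : 1 ≤ j) : resShape p n j = lam j := by
  obtain ⟨hbox, hinj, hsurj⟩ := h
  suffices h : resShape p n j = (Finset.Icc 1 (lam j)).card by simpa using h
  refine Finset.card_bij (fun k _ => (p k).1) ?_ ?_ ?_
  · intro k hk
    rw [Finset.mem_filter] at hk
    have hk' := hbox k (by simpa using hk.1)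
    rw [colT] at hk
    rw [Finset.mem_Icc, ← hk.2]
    exact ⟨hk'.2.1, hk'.2.2⟩
  · intro k hk l hl hkl
    rw [Finset.mem_filter] at hk hl
    exact hinj k (by simpa using hk.1) l (by simpa using hl.1)
      (Prod.ext hkl (hk.2.trans hl.2.symm))
  · intro r hr
    rw [Finset.mem_Icc] at hr
    obtain ⟨k, hk, hpk⟩ := hsurj (r, j) hj hr.1 hr.2
    exact ⟨k, Finset.mem_filter.2 ⟨by simpa using hk, by rw [colT, hpk]⟩, by rw [hpk]⟩

lemma IsStd.isTab {lam : ℕ → ℕ} {n : ℕ} {p : ℕ → ℕ × ℕ} (h : IsStd lam n p) : IsTab lam n p :=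
  h.1

lemma IsTab.psum_resShape {lam : ℕ → ℕ} {n : ℕ} {p : ℕ → ℕ × ℕ} (h : IsTab lam n p) (k : ℕ) :
    psum (resShape p n) k = psum lam k :=
  Finset.sum_congr rfl fun _ hj => h.resShape_eq (Finset.mem_Icc.1 hj).1

theorem nminus1_restricted_order_general (n : ℕ) (mu lam : ℕ → ℕ)
    (pu pt : ℕ → ℕ × ℕ) (hu : IsStd mu n pu) (ht : IsStd lam n pt)
    (hres : RestNum n pu pt (n-1))
    (hDu : inD 0 n pu (n-1)) (hDt : ¬ inD 0 n pt (n-1)) :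
    colT pu n < colT pt n ∧ (Dominates lam mu ∧ mu ≠ lam) ∧
      (ExtDomLe n pu pt ∧ ∃ m ∈ Finset.Icc 1 n, pu m ≠ pt m) := by
  obtain ⟨m, rfl⟩ : ∃ m, n = m + 1 := ⟨n - 1, by unfold inD at hDu; omega⟩
  simp only [Nat.add_sub_cancel] at hres hDu hDt
  have hagree : ∀ k ∈ Finset.Icc 1 m, colT pu k = colT pt k := fun k hk => by
    rw [colT, colT, hres.2.1 k (Finset.mem_Icc.1 hk).1 (Finset.mem_Icc.1 hk).2]
  have hcol : colT pu (m + 1) < colT pt (m + 1) := by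
    have hprev := hagree m (by unfold inD at hDu; simp only [Finset.mem_Icc]; omega)
    unfold inD at hDu hDt
    omega
  have hpos : 1 ≤ colT pu (m + 1) := (hu.1.1 (m + 1) (by simp)).1
  have hshape := resShape_congr hagree
  have hdom := dominates_resShape_succ hshape hpos hcol.le
  refine ⟨hcol, ⟨fun k => ?_, fun hml => ?_⟩, fun k hk => ?_,
    ⟨m + 1, by simp, fun h => hcol.ne (congrArg Prod.snd h)⟩⟩
  · rw [← hu.isTab.psum_resShape, ← ht.isTab.psum_resShape]
    exact hdom k
  · apply resShape_succ_ne hshape hcol.ne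
    rw [hu.isTab.resShape_eq hpos, ht.isTab.resShape_eq hpos, hml]
  · rcases (Finset.mem_Icc.1 hk).2.lt_or_eq with hkm | rfl
    · have : resShape pu k = resShape pt k :=
        funext (resShape_congr fun i hi => hagree i (Finset.Icc_subset_Icc_right (by omega) hi))
      exact fun _ => (congrArg (psum · _) this).ge
    · exact hdom

/-- if the restriction number of `(u,t)` is `n-1` and
`D(u) = D(t) ∪ {n-1}` with `n-1 ∉ D(t)`, then `col_u(n) < col_t(n)`,
`shape(u) < shape(t)` in dominance order, and `u < t` in the extended
dominance order. -/
theorem nminus1_restricted_order (n : ℕ) (mu lam : ℕ → ℕ)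
    (hmu : IsPartition n mu) (hlam : IsPartition n lam)
    (pu pt : ℕ → ℕ × ℕ) (hu : IsStd mu n pu) (ht : IsStd lam n pt)
    (hres : RestNum n pu pt (n-1))
    (hDu : inD 0 n pu (n-1)) (hDt : ¬ inD 0 n pt (n-1))
    (hDeq : ∀ i, i ≠ n - 1 → (inD 0 n pu i ↔ inD 0 n pt i)) :
    colT pu n < colT pt n ∧ (Dominates lam mu ∧ mu ≠ lam) ∧
      (ExtDomLe n pu pt ∧ ∃ m ∈ Finset.Icc 1 n, pu m ≠ pt m) :=
  nminus1_restricted_order_general n mu lam pu pt hu ht hres hDu hDt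
end
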